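/- Let m ≥ 2 be such that L := log₂ m is a positive integer dividing m, and let X = m/L. For x ∈ {1,…,X}, define v^[x] : {0,…,m} → ℝ by v^[x](s) = 0 if s ≤ m − xL, and v^[x](s) = m·(x − x') + 2^{s − (m − x'L)} where x' is the unique integer in {1,…,x} with m − x'L < s ≤ m − (x'−1)L. Then each v^[x] is a multi-unit valuation on m items taking integer values in {0, 1, …, m²}, and the family V = { v^[1], …, v^[X] } is single-crossing with respect to the order by index: for all x' > x and all quantities s̄ > s in {0,…,m}, v^[x'](s̄) − v^[x'](s) ≥ v^[x](s̄) − v^[x](s). -/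
import Mathlib


/-- The `x`-th valuation of the no-sketch domain: `v^[x](s) = 0` for
`s ≤ m − xL`, and otherwise `v^[x](s) = m(x − x') + 2^{s − (m − x'L)}`, where
`x' = ⌊(m−s)/L⌋ + 1` is the unique index with `m − x'L < s ≤ m − (x'−1)L`. -/
noncomputable def vX (m L x s : ℕ) : ℝ :=
  if s ≤ m - x * L then 0
  else
    (m : ℝ) * ((x : ℝ) - (((m - s) / L + 1 : ℕ) : ℝ)) +
      (2 : ℝ) ^ (s - (m - ((m - s) / L + 1) * L))

namespace NoSketchAux

/-- Natural-number value of `vX` in the positive region. -/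
def Nval (m L x s : ℕ) : ℕ :=
  m * (x - 1 - (m - s) / L) + 2 ^ (L - (m - s) % L)

/-- The increment `vX m L x (s+1) - vX m L x s` in the positive region. -/
def Dstep (m L s : ℕ) : ℕ :=
  if (m - s) % L = 0 then 2 else 2 ^ (L - (m - s) % L)

lemma q_lt (L r x : ℕ) (hL : 0 < L) (h : r < x * L) : r / L < x := by
  have h1 := Nat.div_add_mod r L
  have h2 : x * L = L * x := by ring
  have h3 : L * (r / L) < L * x := by omega
  exact Nat.lt_of_mul_lt_mul_left h3

lemma pred_div (L r : ℕ) (hL : 0 < L) (hu : r % L ≠ 0) :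
    (r - 1) / L = r / L ∧ (r - 1) % L = r % L - 1 := by
  have h1 := Nat.div_add_mod r L
  have h2 : r % L < L := Nat.mod_lt _ hL
  have e : r - 1 = L * (r / L) + (r % L - 1) := by omega
  constructor
  · rw [e, Nat.mul_add_div hL, Nat.div_eq_of_lt (show r % L - 1 < L by omega)]; omega
  · rw [e, Nat.mul_add_mod, Nat.mod_eq_of_lt (show r % L - 1 < L by omega)]

lemma pred_div0 (L r : ℕ) (hL : 0 < L) (hr : 1 ≤ r) (hu : r % L = 0) :
    (r - 1) / L = r / L - 1 ∧ (r - 1) % L = L - 1 := by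
  have h1 := Nat.div_add_mod r L
  have hLr : L ≤ r := by
    by_contra h
    push_neg at h
    rw [Nat.mod_eq_of_lt h] at hu
    omega
  have hq : 1 ≤ r / L := Nat.div_pos hLr hL
  have e : r - 1 = L * (r / L - 1) + (L - 1) := by
    have h3 : L * (r / L - 1) + L = L * (r / L) := by
      rw [← Nat.mul_succ]
      congr 1
      omega
    omega
  constructor
  · rw [e, Nat.mul_add_div hL, Nat.div_eq_of_lt (show L - 1 < L by omega)]; omega
  · rw [e, Nat.mul_add_mod, Nat.mod_eq_of_lt (show L - 1 < L by omega)]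

lemma vX_eq (m L x s : ℕ) (hL : 0 < L) (hxL : x * L ≤ m)
    (hreg : m - x * L < s) (hs : s ≤ m) :
    vX m L x s = (Nval m L x s : ℝ) := by
  have hr : m - s < x * L := by omega
  have hq : (m - s) / L < x := q_lt L (m - s) x hL hr
  have hdm := Nat.div_add_mod (m - s) L
  have hmod : (m - s) % L < L := Nat.mod_lt _ hL
  have hq1 : ((m - s) / L + 1) * L ≤ m := by
    have h4 : ((m - s) / L + 1) * L ≤ x * L := Nat.mul_le_mul (by omega) le_rfl
    omega
  have hle : ((m - s) / L + 1) * L = L * ((m - s) / L) + L := by ring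
  have hexp : s - (m - ((m - s) / L + 1) * L) = L - (m - s) % L := by
    rw [hle] at hq1 ⊢
    omega
  have hx' : (m - s) / L + 1 ≤ x := by omega
  have e2 : x - 1 - (m - s) / L = x - ((m - s) / L + 1) := by omega
  simp only [vX, Nval]
  rw [if_neg (by omega), hexp, e2]
  push_cast [Nat.cast_sub hx']
  ring

lemma Nval_boundary (m L x : ℕ) (hL : 0 < L) (hx1 : 1 ≤ x) (hxL : x * L ≤ m) :
    Nval m L x (m - x * L + 1) = 2 := by
  have hpos : 0 < x * L := Nat.mul_pos hx1 hL
  have h1 : m - (m - x * L + 1) = x * L - 1 := by omega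
  have h2 : L * (x - 1) + L = L * x := by
    rw [← Nat.mul_succ]
    congr 1
    omega
  have h3 : L * x = x * L := Nat.mul_comm L x
  have e : x * L - 1 = L * (x - 1) + (L - 1) := by omega
  rw [Nval, h1, e, Nat.mul_add_div hL, Nat.mul_add_mod,
    Nat.div_eq_of_lt (show L - 1 < L by omega),
    Nat.mod_eq_of_lt (show L - 1 < L by omega)]
  have h5 : x - 1 - (x - 1 + 0) = 0 := by omega
  have h6 : L - (L - 1) = 1 := by omega
  rw [h5, h6]
  simp

lemma Nval_step (m L x s : ℕ) (hL : 0 < L) (hpow : 2 ^ L = m)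
    (hreg : m - x * L < s) (hs : s < m) (hxL : x * L ≤ m) :
    Nval m L x (s + 1) = Nval m L x s + Dstep m L s := by
  have hr1 : 1 ≤ m - s := by omega
  have hr : m - s < x * L := by omega
  have hq : (m - s) / L < x := q_lt L (m - s) x hL hr
  have h1 : m - (s + 1) = m - s - 1 := by omega
  by_cases hu : (m - s) % L = 0
  · obtain ⟨hd, hm'⟩ := pred_div0 L (m - s) hL hr1 hu
    have hLr : L ≤ m - s := by
      by_contra h
      push_neg at h
      rw [Nat.mod_eq_of_lt h] at hu
      omega
    have hq1 : 1 ≤ (m - s) / L := Nat.div_pos hLr hL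
    simp only [Nval, Dstep, if_pos hu]
    rw [h1, hd, hm', hu]
    have e1 : L - (L - 1) = 1 := by omega
    have e2 : L - 0 = L := by omega
    rw [e1, e2, hpow]
    have e3 : x - 1 - ((m - s) / L - 1) = x - 1 - (m - s) / L + 1 := by omega
    rw [e3, Nat.mul_add, Nat.mul_one]
    ring
  · obtain ⟨hd, hm'⟩ := pred_div L (m - s) hL hu
    have hmod : (m - s) % L < L := Nat.mod_lt _ hL
    simp only [Nval, Dstep, if_neg hu]
    rw [h1, hd, hm']
    have e1 : L - ((m - s) % L - 1) = L - (m - s) % L + 1 := by omega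
    rw [e1, pow_succ]
    ring

lemma inc_eq (m L x s : ℕ) (hL : 0 < L) (hpow : 2 ^ L = m)
    (hx1 : 1 ≤ x) (hxL : x * L ≤ m) (hs : s < m) :
    vX m L x (s + 1) - vX m L x s =
      if s < m - x * L then 0 else (Dstep m L s : ℝ) := by
  have hpos : 0 < x * L := Nat.mul_pos hx1 hL
  rcases lt_trichotomy s (m - x * L) with h | h | h
  · rw [if_pos h]
    have e1 : vX m L x (s + 1) = 0 := by rw [vX, if_pos (by omega)]
    have e2 : vX m L x s = 0 := by rw [vX, if_pos (by omega)]
    rw [e1, e2]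
    ring
  · rw [if_neg (by omega)]
    have e2 : vX m L x s = 0 := by rw [vX, if_pos (by omega)]
    rw [e2, vX_eq m L x (s + 1) hL hxL (by omega) (by omega)]
    rw [show s + 1 = m - x * L + 1 from by omega]
    rw [Nval_boundary m L x hL hx1 hxL]
    simp only [Dstep]
    rw [show m - s = x * L from by omega, if_pos (Nat.mul_mod_left x L)]
    norm_num
  · rw [if_neg (by omega)]
    rw [vX_eq m L x (s + 1) hL hxL (by omega) (by omega),
      vX_eq m L x s hL hxL h (by omega)]
    rw [Nval_step m L x s hL hpow h hs hxL]
    push_cast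
    ring

lemma inc_mono (m L x x' s : ℕ) (hL : 0 < L) (hpow : 2 ^ L = m)
    (hx1 : 1 ≤ x) (hxx : x ≤ x') (hxL : x' * L ≤ m) (hs : s < m) :
    vX m L x (s + 1) - vX m L x s ≤ vX m L x' (s + 1) - vX m L x' s := by
  have hmul : x * L ≤ x' * L := Nat.mul_le_mul hxx le_rfl
  have hxL' : x * L ≤ m := le_trans hmul hxL
  rw [inc_eq m L x s hL hpow hx1 hxL' hs,
    inc_eq m L x' s hL hpow (by omega) hxL hs]
  split_ifs with h1 h2 h3
  · exact le_refl 0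
  · exact Nat.cast_nonneg _
  · exact absurd h3 (by omega)
  · exact le_refl _

lemma vX_mono_aux (m L x : ℕ) (hL : 0 < L) (hpow : 2 ^ L = m)
    (hx1 : 1 ≤ x) (hxL : x * L ≤ m) :
    ∀ n s : ℕ, s + n ≤ m → vX m L x s ≤ vX m L x (s + n) := by
  intro n
  induction n with
  | zero => intro s _; rw [Nat.add_zero]
  | succ n ih =>
    intro s hs
    have h1 := ih s (by omega)
    have h3 := inc_eq m L x (s + n) hL hpow hx1 hxL (by omega)
    have h2 : vX m L x (s + n) ≤ vX m L x (s + n + 1) := by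
      split_ifs at h3 with h
      · linarith
      · have := Nat.cast_nonneg (α := ℝ) (Dstep m L (s + n))
        linarith
    rw [show s + (n + 1) = s + n + 1 from by omega]
    linarith

lemma vX_sc_aux (m L x x' : ℕ) (hL : 0 < L) (hpow : 2 ^ L = m)
    (hx1 : 1 ≤ x) (hxx : x ≤ x') (hxL : x' * L ≤ m) :
    ∀ n s : ℕ, s + n ≤ m →
      vX m L x (s + n) - vX m L x s ≤ vX m L x' (s + n) - vX m L x' s := by
  intro n
  induction n with
  | zero => intro s _; rw [Nat.add_zero, sub_self, sub_self]
  | succ n ih =>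
    intro s hs
    have h1 := ih s (by omega)
    have h2 := inc_mono m L x x' (s + n) hL hpow hx1 hxx hxL (by omega)
    rw [show s + (n + 1) = s + n + 1 from by omega]
    linarith

end NoSketchAux

open NoSketchAux in
/-- when `L = log₂ m` is a positive integer dividing `m` and
`X = m / L`, each `v^[x]` (for `1 ≤ x ≤ X`) is a multi-unit valuation on `m`
items taking integer values in `{0, 1, …, m²}`, and the family
`v^[1], …, v^[X]` is single-crossing with respect to the order by index. -/
theorem no_sketch_domain_single_crossing
    (m L : ℕ) (hm : 2 ≤ m) (hL : 0 < L) (hpow : 2 ^ L = m) (hdvd : L ∣ m) :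
    (∀ x : ℕ, 1 ≤ x → x ≤ m / L →
      vX m L x 0 = 0 ∧
      (∀ s t : ℕ, s ≤ t → t ≤ m → vX m L x s ≤ vX m L x t) ∧
      (∀ s : ℕ, s ≤ m → ∃ z : ℕ, vX m L x s = (z : ℝ) ∧ z ≤ m ^ 2)) ∧
    (∀ x x' : ℕ, 1 ≤ x → x < x' → x' ≤ m / L → ∀ s t : ℕ, s < t → t ≤ m →
      vX m L x t - vX m L x s ≤ vX m L x' t - vX m L x' s) := by
  constructor
  · intro x hx1 hxX
    have hxL : x * L ≤ m := by
      calc x * L ≤ (m / L) * L := Nat.mul_le_mul hxX le_rfl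
        _ = m := Nat.div_mul_cancel hdvd
    refine ⟨?_, ?_, ?_⟩
    · rw [vX, if_pos (Nat.zero_le _)]
    · intro s t hst htm
      have h := vX_mono_aux m L x hL hpow hx1 hxL (t - s) s (by omega)
      rwa [show s + (t - s) = t from by omega] at h
    · intro s hsm
      by_cases h : s ≤ m - x * L
      · refine ⟨0, ?_, Nat.zero_le _⟩
        rw [vX, if_pos h]
        norm_num
      · push_neg at h
        refine ⟨Nval m L x s, vX_eq m L x s hL hxL h hsm, ?_⟩
        have hq : (m - s) / L < x := q_lt L (m - s) x hL (by omega)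
        have hxm : x ≤ m := le_trans hxX (Nat.div_le_self m L)
        calc Nval m L x s ≤ m * (x - 1) + 2 ^ L := by
              apply Nat.add_le_add
              · exact Nat.mul_le_mul le_rfl (Nat.sub_le _ _)
              · exact Nat.pow_le_pow_right (by norm_num) (by omega)
          _ = m * (x - 1) + m := by rw [hpow]
          _ ≤ m * x := by
              have h2 : m * (x - 1) + m = m * x := by
                rw [← Nat.mul_succ]
                congr 1
                omega
              omega
          _ ≤ m * m := Nat.mul_le_mul le_rfl hxm
          _ = m ^ 2 := (sq m).symm
  · intro x x' hx1 hxx' hx'X s t hst htm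
    have hxL' : x' * L ≤ m := by
      calc x' * L ≤ (m / L) * L := Nat.mul_le_mul hx'X le_rfl
        _ = m := Nat.div_mul_cancel hdvd
    have h := vX_sc_aux m L x x' hL hpow hx1 (le_of_lt hxx') hxL' (t - s) s (by omega)
    rwa [show s + (t - s) = t from by omega] at h
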